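/- For every n ≥ 1, every 2-factor of the graph H_n that contains the edge v_0 v_n is a Hamiltonian cycle; moreover, every such 2-factor contains all the edges v_i v_{2n-i} for 1 ≤ i < n. -/

import Mathlib

open SimpleGraph

/-- `H` is a minor of `G`. -/
def SimpleGraph.IsMinorOf {U V : Type*} (H : SimpleGraph U) (G : SimpleGraph V) : Prop :=
  ∃ φ : U → Set V,
    (∀ u, (G.induce (φ u)).Connected) ∧
    (∀ u u', u ≠ u' → Disjoint (φ u) (φ u')) ∧
    (∀ u u', H.Adj u u' → ∃ a ∈ φ u, ∃ b ∈ φ u', G.Adj a b)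

/-- Planarity via Wagner's theorem: no `K₅` and no `K₃,₃` minor. -/
def SimpleGraph.IsPlanar {V : Type*} (G : SimpleGraph V) : Prop :=
  ¬ (completeGraph (Fin 5)).IsMinorOf G ∧
  ¬ (completeBipartiteGraph (Fin 3) (Fin 3)).IsMinorOf G

def SimpleGraph.IsCubic {V : Type*} (G : SimpleGraph V) : Prop :=
  ∀ v, (G.neighborSet v).ncard = 3

/-- Removing the edge set `s` increases the number of components. -/
def SimpleGraph.Disconnects {V : Type*} (G : SimpleGraph V) (s : Set (Sym2 V)) : Prop :=
  ∃ x y : V, G.Reachable x y ∧ ¬ (G.deleteEdges s).Reachable x y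

def SimpleGraph.TwoEdgeConnected {V : Type*} (G : SimpleGraph V) : Prop :=
  G.Connected ∧ ∀ e : Sym2 V, ¬ G.Disconnects {e}

/-- A 2-factor: spanning 2-regular subgraph. -/
def SimpleGraph.Subgraph.IsTwoFactor {V : Type*} {G : SimpleGraph V} (F : G.Subgraph) : Prop :=
  F.IsSpanning ∧ ∀ v, (F.neighborSet v).ncard = 2

/-- `uv` is a chord of some cycle contained in a 2-factor of `G`. -/
def SimpleGraph.IsChordOfTwoFactorCycle {V : Type*} (G : SimpleGraph V) (u v : V) : Prop :=
  ∃ F : G.Subgraph, F.IsTwoFactor ∧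
    ∃ p : F.spanningCoe.Walk u u, p.IsCycle ∧ v ∈ p.support ∧ s(u, v) ∉ p.edges

def SimpleGraph.IsCycleEdgeSet {V : Type*} [DecidableEq V] (G : SimpleGraph V)
    (f : Finset (Sym2 V)) : Prop :=
  ∃ (x : V) (p : G.Walk x x), p.IsCycle ∧ f = p.edges.toFinset

/-- A face (given by its boundary edges) is monochromatic under the coloring `c`. -/
def FaceMono {V α : Type*} (c : V → α) (f : Finset (Sym2 V)) : Prop :=
  ∃ k, ∀ e ∈ f, ∀ x ∈ e, c x = k

/-- The graph `Hₙ`: the cycle `v₀, v₁, …, v_{2n-1}` (vertices `ZMod (2*n)`) together with the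
edge `v₀ vₙ` and the edges `vᵢ v_{2n-i}` for `1 ≤ i < n`. -/
def Hgraph (n : ℕ) : SimpleGraph (ZMod (2 * n)) where
  Adj i j := i ≠ j ∧ (i = j + 1 ∨ j = i + 1 ∨ i + j = 0 ∨
      (i = 0 ∧ j = (n : ZMod (2 * n))) ∨ (j = 0 ∧ i = (n : ZMod (2 * n))))
  symm := by
    constructor
    rintro i j ⟨hne, h⟩
    refine ⟨hne.symm, ?_⟩
    rcases h with h | h | h | h | h
    · exact Or.inr (Or.inl h)
    · exact Or.inl h
    · exact Or.inr (Or.inr (Or.inl (by rw [add_comm]; exact h)))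
    · exact Or.inr (Or.inr (Or.inr (Or.inr h)))
    · exact Or.inr (Or.inr (Or.inr (Or.inl h)))
  loopless := ⟨fun i h => h.1 rfl⟩

/-!
Indices live in `ZMod (2 * n)`, so `v_{2n-i}` is `v_{-i}`. A 2-factor of a cubic graph omits
exactly one edge at each vertex. As `v₀ vₙ` is used, exactly one of `v₀ v_s` (`s = ±1`) is
used. If the cycle edge `v_{sj} v_{s(j+1)}` is used but its mirror image `v_{-sj} v_{-s(j+1)}`
is not, then `v_{-s(j+1)}` must use its two other edges, the chord to `v_{s(j+1)}` and the cycle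
edge to `v_{-s(j+2)}`; this fills both slots at `v_{s(j+1)}`, so the situation repeats with `-s`.
Hence every chord is used, and the 2-factor zigzags through all vertices.
-/

namespace SimpleGraph.Subgraph

variable {V : Type*} {G : SimpleGraph V} {F : G.Subgraph} {v x y z : V}

theorem adj_of_not_adj_of_neighborSet_subset (hv : (F.neighborSet v).ncard = 2)
    (hsub : F.neighborSet v ⊆ {x, y, z}) (hx : ¬ F.Adj v x) : F.Adj v y ∧ F.Adj v z := by
  have hyz : F.neighborSet v ⊆ {y, z} := fun w hw => by
    rcases hsub hw with rfl | hw'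
    · exact absurd hw hx
    · exact hw'
  have hcard : ({y, z} : Set V).ncard ≤ (F.neighborSet v).ncard := by
    simpa [hv] using Set.ncard_insert_le y {z}
  have heq : F.neighborSet v = {y, z} := Set.eq_of_subset_of_ncard_le hyz hcard (Set.toFinite _)
  exact ⟨show y ∈ F.neighborSet v by simp [heq], show z ∈ F.neighborSet v by simp [heq]⟩

theorem not_adj_of_adj_of_adj (hv : (F.neighborSet v).ncard = 2)
    (hxy : x ≠ y) (hxz : x ≠ z) (hyz : y ≠ z) (hx : F.Adj v x) (hy : F.Adj v y) :
    ¬ F.Adj v z := by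
  intro hz
  have hsub : {x, y, z} ⊆ F.neighborSet v := by
    rintro w (rfl | rfl | rfl) <;> assumption
  have := Set.ncard_le_ncard hsub (Set.finite_of_ncard_ne_zero (by omega))
  rw [Set.ncard_eq_three.mpr ⟨x, y, z, hxy, hxz, hyz, rfl⟩] at this
  omega

end SimpleGraph.Subgraph

namespace Hgraph

variable {n : ℕ}

theorem neg_natCast_self : -(n : ZMod (2 * n)) = n := by
  rw [neg_eq_iff_add_eq_zero, ← two_mul]
  exact_mod_cast ZMod.natCast_self (2 * n)

theorem two_ne_zero_of_two_le (hn : 2 ≤ n) : (2 : ZMod (2 * n)) ≠ 0 := by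
  have : ((2 : ℕ) : ZMod (2 * n)) ≠ 0 := by
    rw [Ne, ZMod.natCast_eq_zero_iff]
    exact Nat.not_dvd_of_pos_of_lt (by norm_num) (by omega)
  exact_mod_cast this

theorem two_mul_ne_sign (x : ZMod (2 * n)) {s : ZMod (2 * n)} (hs : s = 1 ∨ s = -1) :
    2 * x ≠ s := by
  intro h
  have h2 := congrArg (ZMod.castHom (dvd_mul_right 2 n) (ZMod 2)) h
  have two : (2 : ZMod 2) = 0 := rfl
  rcases hs with rfl | rfl <;>
    simp only [map_mul, map_ofNat, map_one, map_neg, two, zero_mul] at h2 <;> revert h2 <;> decide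

theorem natCast_ne_zero {j : ℕ} (h0 : 0 < j) (hj : j < 2 * n) : (j : ZMod (2 * n)) ≠ 0 := by
  rw [Ne, ZMod.natCast_eq_zero_iff]
  exact Nat.not_dvd_of_pos_of_lt h0 hj

theorem natCast_ne_natCast_self {j : ℕ} (hj : j < n) : (j : ZMod (2 * n)) ≠ n := by
  rw [Ne, ZMod.natCast_eq_natCast_iff' _ _ (2 * n), Nat.mod_eq_of_lt (by omega),
    Nat.mod_eq_of_lt (by omega)]
  omega

theorem ne_zero_of_adj_zero_natCast (h : (Hgraph n).Adj 0 n) : n ≠ 0 := by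
  rintro rfl
  exact h.1 Nat.cast_zero.symm

theorem neighborSet_zero_subset : (Hgraph n).neighborSet 0 ⊆ {1, -1, (n : ZMod (2 * n))} := by
  rintro u ⟨hne, h | h | h | ⟨-, h⟩ | ⟨h, -⟩⟩
  · exact Or.inr (Or.inl (by linear_combination -h))
  · exact Or.inl (by linear_combination h)
  · exact absurd (by linear_combination -h) hne
  · exact Or.inr (Or.inr h)
  · exact absurd h.symm hne

theorem neighborSet_subset {a s : ZMod (2 * n)} (hs : s = 1 ∨ s = -1) (ha0 : a ≠ 0)
    (han : a ≠ n) : (Hgraph n).neighborSet a ⊆ {a - s, a + s, -a} := by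
  rintro u ⟨-, h | h | h | ⟨h, -⟩ | ⟨-, h⟩⟩
  · rcases hs with rfl | rfl
    · exact Or.inl (by linear_combination -h)
    · exact Or.inr (Or.inl (by linear_combination -h))
  · rcases hs with rfl | rfl
    · exact Or.inr (Or.inl h)
    · exact Or.inl (by linear_combination h)
  · exact Or.inr (Or.inr (show u = -a by linear_combination h))
  · exact absurd h ha0
  · exact absurd h han

variable {F : (Hgraph n).Subgraph}

theorem two_le_of_isTwoFactor (hF : F.IsTwoFactor) (hn : n ≠ 0) : 2 ≤ n := by
  by_contra! hlt
  obtain rfl : n = 1 := by omega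
  have hsub : F.neighborSet 0 ⊆ {1} :=
    (F.neighborSet_subset 0).trans (neighborSet_zero_subset.trans (by simp))
  have := Set.ncard_le_ncard hsub
  rw [Set.ncard_singleton, hF.2 0] at this
  omega

theorem adj_neg_of_adj_of_not_adj (hn : 2 ≤ n) (hF : F.IsTwoFactor) {a s : ZMod (2 * n)}
    (hs : s = 1 ∨ s = -1) (ha0 : a ≠ 0) (han : a ≠ n)
    (hprev : F.Adj a (a - s)) (hprev' : ¬ F.Adj (-a) (-a + s)) :
    F.Adj a (-a) ∧ ¬ F.Adj a (a + s) ∧ F.Adj (-a) (-a - s) := by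
  have hs' : -s = 1 ∨ -s = -1 := by rcases hs with rfl | rfl <;> simp
  have hsub' : F.neighborSet (-a) ⊆ {-a + s, -a - s, a} := by
    refine (F.neighborSet_subset _).trans
      ((neighborSet_subset hs' (neg_ne_zero.2 ha0) ?_).trans ?_)
    · rwa [Ne, neg_eq_iff_eq_neg, neg_natCast_self]
    · simp only [sub_neg_eq_add, ← sub_eq_add_neg, neg_neg]
      exact subset_rfl
  obtain ⟨hnext', hchord⟩ := F.adj_of_not_adj_of_neighborSet_subset (hF.2 _) hsub' hprev'
  refine ⟨hchord.symm, F.not_adj_of_adj_of_adj (hF.2 a) ?_ ?_ ?_ hprev hchord.symm, hnext'⟩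
  · exact fun h => two_mul_ne_sign a hs (by linear_combination h)
  · intro h
    apply two_ne_zero_of_two_le hn
    rcases hs with rfl | rfl
    · linear_combination -h
    · linear_combination h
  · exact fun h => two_mul_ne_sign a hs' (by linear_combination -h)

theorem sign_mul_natCast_ne {s : ZMod (2 * n)} (hs : s = 1 ∨ s = -1) {j : ℕ} (h0 : 0 < j)
    (hj : j < n) : s * j ≠ 0 ∧ s * j ≠ n := by
  have hj0 := natCast_ne_zero (n := n) h0 (by omega)
  have hjn := natCast_ne_natCast_self hj
  rcases hs with rfl | rfl
  · rw [one_mul]; exact ⟨hj0, hjn⟩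
  · rw [neg_one_mul, neg_ne_zero, ne_eq (-_), neg_eq_iff_eq_neg, neg_natCast_self]
    exact ⟨hj0, hjn⟩

def Zigzag (F : (Hgraph n).Subgraph) (s : ZMod (2 * n)) (j : ℕ) : Prop :=
  F.Adj (s * j) (s * (j + 1)) ∧ ¬ F.Adj (-(s * j)) (-(s * (j + 1)))

theorem zigzag_step (hn : 2 ≤ n) (hF : F.IsTwoFactor) {s : ZMod (2 * n)} (hs : s = 1 ∨ s = -1)
    {j : ℕ} (hj : j + 1 < n) (hz : Zigzag F s j) :
    F.Adj (s * (j + 1 : ℕ)) (-(s * (j + 1 : ℕ))) ∧ Zigzag F (-s) (j + 1) := by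
  obtain ⟨hadj, hnadj⟩ := hz
  obtain ⟨ha0, han⟩ := sign_mul_natCast_ne hs (j := j + 1) (by omega) hj
  unfold Zigzag
  push_cast at ha0 han ⊢
  obtain ⟨hchord, hnext, hnext'⟩ := adj_neg_of_adj_of_not_adj hn hF hs ha0 han
    (by convert hadj.symm using 1; ring) (fun h => hnadj (by convert h.symm using 2; ring))
  exact ⟨hchord, by convert hnext' using 2 <;> ring, by convert hnext using 2 <;> ring⟩

theorem exists_zigzag (hn : 2 ≤ n) (hF : F.IsTwoFactor) (h0n : F.Adj 0 n) {j : ℕ} (hj : j < n) :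
    ∃ s : ZMod (2 * n), (s = 1 ∨ s = -1) ∧ Zigzag F s j := by
  induction j with
  | zero =>
    simp only [Zigzag, Nat.cast_zero, mul_zero, zero_add, mul_one, neg_zero]
    have h1n : (1 : ZMod (2 * n)) ≠ n := by
      exact_mod_cast natCast_ne_natCast_self (j := 1) (by omega)
    have hn1 : (-1 : ZMod (2 * n)) ≠ n := by
      rw [Ne, neg_eq_iff_eq_neg, neg_natCast_self]; exact h1n
    have h11 : (1 : ZMod (2 * n)) ≠ -1 :=
      fun h => two_ne_zero_of_two_le hn (by linear_combination h)
    have hsub := (F.neighborSet_subset 0).trans (neighborSet_zero_subset (n := n))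
    by_cases h01 : F.Adj 0 1
    · exact ⟨1, Or.inl rfl, h01,
        fun h => F.not_adj_of_adj_of_adj (hF.2 0) h1n.symm hn1.symm h11 h0n h01 h⟩
    · refine ⟨-1, Or.inr rfl, (F.adj_of_not_adj_of_neighborSet_subset (hF.2 0) hsub h01).1, ?_⟩
      rwa [neg_neg]
  | succ j ih =>
    obtain ⟨s, hs, hz⟩ := ih (by omega)
    exact ⟨-s, by rcases hs with rfl | rfl <;> simp, (zigzag_step hn hF hs hj hz).2⟩

theorem adj_natCast_neg (hn : 2 ≤ n) (hF : F.IsTwoFactor) (h0n : F.Adj 0 n) {i : ℕ}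
    (hi0 : 1 ≤ i) (hi : i < n) : F.Adj (i : ZMod (2 * n)) (-i) := by
  obtain ⟨j, rfl⟩ : ∃ j, i = j + 1 := ⟨i - 1, by omega⟩
  obtain ⟨s, hs, hz⟩ := exists_zigzag hn hF h0n (j := j) (by omega)
  have hchord := (zigzag_step hn hF hs hi hz).1
  rcases hs with rfl | rfl
  · simpa using hchord
  · simpa using hchord.symm

theorem reachable_natCast (hn : 2 ≤ n) (hF : F.IsTwoFactor) (h0n : F.Adj 0 n) {j : ℕ}
    (hj : j ≤ n) : F.spanningCoe.Reachable 0 j ∧ F.spanningCoe.Reachable 0 (-j) := by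
  induction j with
  | zero => simp
  | succ j ih =>
    obtain ⟨s, hs, hadj, -⟩ := exists_zigzag hn hF h0n (j := j) (by omega)
    obtain ⟨hpos, hneg⟩ := ih (by omega)
    have hprev : F.spanningCoe.Reachable 0 (s * j) := by
      rcases hs with rfl | rfl
      · simpa using hpos
      · simpa using hneg
    have hnext : F.spanningCoe.Reachable 0 (s * (j + 1)) :=
      hprev.trans (Adj.reachable (G := F.spanningCoe) hadj)
    have hmirror : F.spanningCoe.Reachable ((j + 1 : ℕ) : ZMod (2 * n)) (-(j + 1 : ℕ)) := by
      rcases hj.lt_or_eq with hlt | heq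
      · exact Adj.reachable (G := F.spanningCoe) (adj_natCast_neg hn hF h0n (by omega) hlt)
      · rw [heq, neg_natCast_self]
    push_cast at hmirror ⊢
    rcases hs with rfl | rfl
    · rw [one_mul] at hnext
      exact ⟨hnext, hnext.trans hmirror⟩
    · rw [neg_one_mul] at hnext
      exact ⟨hnext.trans hmirror.symm, hnext⟩

theorem connected_spanningCoe (hn : 2 ≤ n) (hF : F.IsTwoFactor) (h0n : F.Adj 0 n) :
    F.spanningCoe.Connected := by
  have : NeZero (2 * n) := ⟨by omega⟩
  have hall (v : ZMod (2 * n)) : F.spanningCoe.Reachable 0 v := by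
    by_cases hv : v.val ≤ n
    · simpa using (reachable_natCast hn hF h0n hv).1
    · have hlt := v.val_lt
      convert (reachable_natCast hn hF h0n (j := 2 * n - v.val) (by omega)).2
      rw [Nat.cast_sub hlt.le, ZMod.natCast_self, ZMod.natCast_zmod_val, zero_sub, neg_neg]
  exact ⟨fun u v => (hall u).symm.trans (hall v)⟩

end Hgraph

theorem Hgraph_two_factor_through_central_edge_general
    (n : ℕ) (F : (Hgraph n).Subgraph)
    (hF : F.IsTwoFactor) (he : s((0 : ZMod (2 * n)), (n : ZMod (2 * n))) ∈ F.edgeSet) :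
    F.spanningCoe.Connected ∧
      ∀ i : ℕ, 1 ≤ i → i < n →
        s((i : ZMod (2 * n)), -(i : ZMod (2 * n))) ∈ F.edgeSet := by
  have h0n : F.Adj 0 n := he
  have hn : 2 ≤ n :=
    Hgraph.two_le_of_isTwoFactor hF (Hgraph.ne_zero_of_adj_zero_natCast h0n.adj_sub)
  exact ⟨Hgraph.connected_spanningCoe hn hF h0n,
    fun i hi0 hi => Hgraph.adj_natCast_neg hn hF h0n hi0 hi⟩

/-- For every `n ≥ 1`, every 2-factor of `Hₙ` containing the edge `v₀ vₙ`
is a Hamiltonian cycle (i.e. connected), and it contains all the edges `vᵢ v_{2n-i}` for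
`1 ≤ i < n`. -/
theorem Hgraph_two_factor_through_central_edge
    (n : ℕ) (hn : 1 ≤ n) (F : (Hgraph n).Subgraph)
    (hF : F.IsTwoFactor) (he : s((0 : ZMod (2 * n)), (n : ZMod (2 * n))) ∈ F.edgeSet) :
    F.spanningCoe.Connected ∧
      ∀ i : ℕ, 1 ≤ i → i < n →
        s((i : ZMod (2 * n)), -(i : ZMod (2 * n))) ∈ F.edgeSet :=
  Hgraph_two_factor_through_central_edge_general n F hF he
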